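/- If w ∈ W̃_{2n+1} = ℤ^n ⋊ S*_{2n} is μ-permissible for the type-B root datum (μ = (1,0,...,0) ∈ ℤ^n as a cocharacter of O_{2n+1}), then its image under the Steinberg embedding W̃_{2n+1} ↪ W̃_{2n+2} (sending translations via (x_1,...,x_n) ↦ (x_1,...,x_n,0) and σ = (ε_1,...,ε_n)·τ to (ε_1,...,ε_n,η)·τ' with η = ±1 according as σ is even or odd) is μ-permissible in W̃_{2n+2} for the type-D root datum. -/

import Mathlib

/-!
The map `a ↦ wa - a` is affine, so the points `a` with `wa - a ∈ Conv(Wμ)` form a closed convex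
set. As the type-B alcove has nonempty interior, permissibility of `w` gives the bound at every
vertex of that alcove, and it suffices to check the image of `w` at the vertices of the type-D
alcove. These are `(b, 0)` with `b` a type-B vertex, and `((1/2)^(n), ±1/2)`; at `(a, c)` the
image of `w` moves `a` by `wa - a` and `c` by `(η - 1)c`. So only the vertices
`((1/2)^(n), ±1/2)` with `σ` odd need an argument: there `wa - a` at `a = (1/2, …, 1/2)` is an
integer vector whose coordinate sum has the parity of `Σ v₀ - #{i | εᵢ = -1}`, which is even, and
`Σ |xᵢ| ≤ 1` then forces it to vanish.
-/

noncomputable section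

/-- The action of w = t_{v₀}σ with σ = (ε₁,...,ε_r)·τ ∈ {±1}^r ⋊ S_r on ℝ^r:
x ↦ (i ↦ ε_i·x(τ⁻¹ i) + v₀(i)). -/
def wAct (r : ℕ) (v0 : Fin r → ℤ) (ε : Fin r → ℤ) (τ : Equiv.Perm (Fin r))
    (x : Fin r → ℝ) : Fin r → ℝ :=
  fun i => (ε i : ℝ) * x (τ⁻¹ i) + (v0 i : ℝ)

/-- Vertices of the base alcove of SO_{2n+1} (type B_n) in ℝ^n:
(0,...,0), (1,0^{(n-1)}) and ((1/2)^{(i)},0^{(n-i)}) for 2 ≤ i ≤ n. -/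
def verticesB (n : ℕ) : Set (Fin n → ℝ) :=
  insert 0 (insert (fun i => if i.val = 0 then 1 else 0)
    {v | ∃ m : ℕ, 2 ≤ m ∧ m ≤ n ∧ v = fun i => if i.val < m then 1 / 2 else 0})

/-- The base alcove of SO_{2n+1} in ℝ^n. -/
def alcoveB (n : ℕ) : Set (Fin n → ℝ) := interior (convexHull ℝ (verticesB n))

/-- Vertices of the base alcove of SO_{2n+2} (type D_{n+1}) in ℝ^{n+1}:
0, (1,0^{(n)}), ((1/2)^{(i)},0^{(n+1-i)}) for 2 ≤ i ≤ n-1, (1/2,...,1/2),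
((1/2)^{(n)},-1/2). -/
def verticesD (n : ℕ) : Set (Fin (n + 1) → ℝ) :=
  insert 0 (insert (fun i => if i.val = 0 then 1 else 0)
    (insert (fun _ => 1 / 2)
      (insert (fun i => if i.val = n then -(1 / 2) else 1 / 2)
        {v | ∃ m : ℕ, 2 ≤ m ∧ m ≤ n - 1 ∧
          v = fun i => if i.val < m then 1 / 2 else 0})))

/-- The base alcove of SO_{2n+2} in ℝ^{n+1}. -/
def alcoveD (n : ℕ) : Set (Fin (n + 1) → ℝ) := interior (convexHull ℝ (verticesD n))

/-- Conv(Wμ) = {x : Σ|x_i| ≤ 1} (for μ = (1,0,...,0), in either type). -/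
def convMu (r : ℕ) : Set (Fin r → ℝ) := {x | ∑ i, |x i| ≤ 1}

/-- μ-permissibility in W̃_{2n+1} (type B_n) for μ = (1,0,...,0):
w ≡ t_μ mod W_{a,2n+1} = Q^∨ ⋊ S*_{2n} (i.e. v₀ - μ has even coordinate sum) and
wa - a ∈ Conv(S*_{2n}μ) for all a in the base alcove. -/
def PermB (n : ℕ) (v0 : Fin n → ℤ) (ε : Fin n → ℤ) (τ : Equiv.Perm (Fin n)) : Prop :=
  Even ((∑ i, v0 i) - 1) ∧
  ∀ a ∈ alcoveB n, (fun i => wAct n v0 ε τ a i - a i) ∈ convMu n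

/-- μ-permissibility in W̃_{2n+2} (type D_{n+1}) for μ = (1,0,...,0):
w ≡ t_μ mod W_{a,2n+2} = Q^∨ ⋊ S°_{2n+2} (i.e. σ = ε·τ is even, ∏ε = 1, and
v₀ - μ has even coordinate sum) and wa - a ∈ Conv(S°_{2n+2}μ) for all a in the
base alcove. -/
def PermD (n : ℕ) (v0 : Fin (n + 1) → ℤ) (ε : Fin (n + 1) → ℤ)
    (τ : Equiv.Perm (Fin (n + 1))) : Prop :=
  (∏ i, ε i) = 1 ∧
  Even ((∑ i, v0 i) - 1) ∧
  ∀ a ∈ alcoveD n, (fun i => wAct (n + 1) v0 ε τ a i - a i) ∈ convMu (n + 1)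

open Finset

theorem Int.sum_abs_eq_zero_of_even_sum {ι : Type*} (s : Finset ι) (b : ι → ℤ)
    (heven : Even (∑ i ∈ s, b i)) (hle : ∑ i ∈ s, |b i| ≤ 1) : ∑ i ∈ s, |b i| = 0 := by
  have hdiff : Even (∑ i ∈ s, (|b i| - b i)) :=
    Finset.even_sum _ fun i _ => Int.even_sub.2 even_abs
  have habs : Even (∑ i ∈ s, |b i|) := by
    simpa [sum_sub_distrib] using heven.add hdiff
  have hnonneg : 0 ≤ ∑ i ∈ s, |b i| := sum_nonneg fun i _ => abs_nonneg _
  obtain ⟨k, hk⟩ := habs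
  omega

theorem prod_eq_neg_one_pow_card_filter {ι : Type*} [Fintype ι] (ε : ι → ℤ)
    (hε : ∀ i, ε i = 1 ∨ ε i = -1) : ∏ i, ε i = (-1) ^ #{i | ε i = -1} := by
  rw [← prod_filter_mul_prod_filter_not univ (fun i => ε i = -1),
    prod_congr rfl fun i hi => (mem_filter.1 hi).2, prod_const,
    prod_eq_one fun i hi => (hε i).resolve_right (mem_filter.1 hi).2, mul_one]

section Permissible

variable {r : ℕ} (v0 ε : Fin r → ℤ) (τ : Equiv.Perm (Fin r))

def permissibleSet : Set (Fin r → ℝ) :=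
  {a | (fun i => wAct r v0 ε τ a i - a i) ∈ convMu r}

theorem mem_permissibleSet_iff (a : Fin r → ℝ) :
    a ∈ permissibleSet v0 ε τ ↔ ∑ i, |wAct r v0 ε τ a i - a i| ≤ 1 :=
  Iff.rfl

theorem convex_permissibleSet : Convex ℝ (permissibleSet v0 ε τ) := by
  intro x hx y hy θ η hθ hη hθη
  rw [mem_permissibleSet_iff] at *
  have hd : ∀ i, wAct r v0 ε τ (θ • x + η • y) i - (θ • x + η • y) i
      = θ * (wAct r v0 ε τ x i - x i) + η * (wAct r v0 ε τ y i - y i) := by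
    intro i
    simp only [wAct, Pi.add_apply, Pi.smul_apply, smul_eq_mul]
    linear_combination (-(v0 i : ℝ)) * hθη
  calc ∑ i, |wAct r v0 ε τ (θ • x + η • y) i - (θ • x + η • y) i|
      ≤ ∑ i, (θ * |wAct r v0 ε τ x i - x i| + η * |wAct r v0 ε τ y i - y i|) := by
        refine sum_le_sum fun i _ => ?_
        rw [hd]
        exact (abs_add_le _ _).trans_eq
          (by rw [abs_mul, abs_mul, abs_of_nonneg hθ, abs_of_nonneg hη])
    _ = θ * ∑ i, |wAct r v0 ε τ x i - x i| + η * ∑ i, |wAct r v0 ε τ y i - y i| := by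
        rw [sum_add_distrib, mul_sum, mul_sum]
    _ ≤ θ * 1 + η * 1 := by gcongr
    _ = 1 := by rw [mul_one, mul_one, hθη]

theorem isClosed_permissibleSet : IsClosed (permissibleSet v0 ε τ) :=
  isClosed_le (f := fun a => ∑ i, |wAct r v0 ε τ a i - a i|) (by simp only [wAct]; fun_prop)
    continuous_const

end Permissible

theorem Convex.subset_of_interior_subset {E : Type*} [AddCommGroup E] [Module ℝ E]
    [TopologicalSpace E] [IsTopologicalAddGroup E] [ContinuousSMul ℝ E] {s t : Set E}
    (hs : Convex ℝ s) (hint : (interior s).Nonempty) (ht : IsClosed t)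
    (h : interior s ⊆ t) : s ⊆ t := by
  refine (subset_closure : s ⊆ closure s).trans ?_
  rw [← hs.closure_interior_eq_closure_of_nonempty_interior hint]
  exact closure_minimal h ht

theorem affineSpan_verticesB (n : ℕ) : affineSpan ℝ (verticesB n) = ⊤ := by
  set S : Set (Fin n → ℝ) := insert (fun i => if i.val = 0 then 1 else 0)
    {v | ∃ m : ℕ, 2 ≤ m ∧ m ≤ n ∧ v = fun i => if i.val < m then 1 / 2 else 0}
  -- The indicator of `{i | i < m}` is twice a vertex, and consecutive indicators differ by a
  -- standard basis vector.
  have hlt : ∀ m ≤ n,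
      (fun i : Fin n => if i.val < m then (1 : ℝ) else 0) ∈ Submodule.span ℝ S := by
    intro m hm
    match m with
    | 0 => exact (Submodule.span ℝ S).zero_mem
    | 1 => exact Submodule.subset_span (by simp [S, Set.mem_insert_iff])
    | k + 2 =>
      have hv : (fun i : Fin n => if i.val < k + 2 then (1 / 2 : ℝ) else 0) ∈ S :=
        Set.mem_insert_of_mem _ ⟨k + 2, by omega, hm, rfl⟩
      convert Submodule.smul_mem _ (2 : ℝ) (Submodule.subset_span hv) using 1
      funext i
      split_ifs <;> simp [*]
  have hsingle : ∀ j : Fin n, Pi.single j 1 ∈ Submodule.span ℝ S := by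
    intro j
    convert Submodule.sub_mem _ (hlt (j + 1) j.isLt) (hlt j j.isLt.le) using 1
    funext i
    simp only [Pi.single_apply, Pi.sub_apply, Fin.ext_iff]
    split_ifs <;> first | omega | norm_num
  have hspan : Submodule.span ℝ S = ⊤ := by
    rw [eq_top_iff, ← (Pi.basisFun ℝ (Fin n)).span_eq, Submodule.span_le]
    rintro _ ⟨j, rfl⟩
    simpa using hsingle j
  rw [eq_top_iff]
  intro x _
  rw [← SetLike.mem_coe, verticesB, affineSpan_insert_zero, hspan]
  trivial

theorem half_mem_verticesB {n : ℕ} (hn : 2 ≤ n) : (fun _ : Fin n => (1 / 2 : ℝ)) ∈ verticesB n :=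
  Set.mem_insert_of_mem _ <| Set.mem_insert_of_mem _ ⟨n, hn, le_rfl, by funext i; simp [i.isLt]⟩

theorem sum_abs_wAct_half_sub_eq_zero {r : ℕ} (v0 ε : Fin r → ℤ) (τ : Equiv.Perm (Fin r))
    (hε : ∀ i, ε i = 1 ∨ ε i = -1) (hodd : ∏ i, ε i = -1) (hpar : Even ((∑ i, v0 i) - 1))
    (hmem : (fun _ => 1 / 2) ∈ permissibleSet v0 ε τ) :
    ∑ i, |wAct r v0 ε τ (fun _ => 1 / 2) i - 1 / 2| = 0 := by
  set b : Fin r → ℤ := fun i => v0 i - if ε i = -1 then 1 else 0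
  have hb : ∀ i, wAct r v0 ε τ (fun _ => 1 / 2) i - 1 / 2 = b i := by
    intro i
    rcases hε i with h | h
    · simp [wAct, b, h]
    · simp [wAct, b, h]
      ring
  have hcast : ∑ i, |wAct r v0 ε τ (fun _ => 1 / 2) i - 1 / 2| = ((∑ i, |b i| : ℤ) : ℝ) := by
    push_cast
    exact sum_congr rfl fun i _ => by rw [hb]
  have hcard : Odd #{i | ε i = -1} := by
    rwa [prod_eq_neg_one_pow_card_filter ε hε, neg_one_pow_eq_neg_one_iff_odd (by norm_num)]
      at hodd
  have heven : Even (∑ i, b i) := by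
    simp only [b, sum_sub_distrib, sum_boole]
    exact (Int.even_sub_one.1 hpar |> Int.not_even_iff_odd.1).sub_odd hcard.natCast
  rw [mem_permissibleSet_iff] at hmem
  rw [hcast] at hmem ⊢
  exact_mod_cast Int.sum_abs_eq_zero_of_even_sum _ b heven (by exact_mod_cast hmem)

section Embedding

variable {n : ℕ}

def Equiv.Perm.extendLast (τ : Equiv.Perm (Fin n)) : Equiv.Perm (Fin (n + 1)) :=
  Equiv.permCongr finSumFinEquiv (Equiv.sumCongr τ (Equiv.refl (Fin 1)))

theorem Equiv.Perm.extendLast_inv_castSucc (τ : Equiv.Perm (Fin n)) (i : Fin n) :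
    τ.extendLast⁻¹ i.castSucc = (τ⁻¹ i).castSucc := by
  rw [Equiv.Perm.inv_eq_iff_eq]
  simp [extendLast, Fin.castSucc]

theorem Equiv.Perm.extendLast_inv_last (τ : Equiv.Perm (Fin n)) :
    τ.extendLast⁻¹ (Fin.last n) = Fin.last n := by
  rw [Equiv.Perm.inv_eq_iff_eq]
  simp only [extendLast, Equiv.permCongr_apply, finSumFinEquiv_symm_last, Equiv.sumCongr_apply,
    Equiv.coe_refl, Sum.map_inr, id_eq, finSumFinEquiv_apply_right]
  rfl

theorem wAct_snoc (v0 ε : Fin n → ℤ) (η : ℤ) (τ : Equiv.Perm (Fin n)) (a : Fin n → ℝ) (c : ℝ) :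
    wAct (n + 1) (Fin.snoc v0 0) (Fin.snoc ε η) τ.extendLast (Fin.snoc a c)
      = Fin.snoc (wAct n v0 ε τ a) (η * c) := by
  funext i
  refine Fin.lastCases ?_ (fun j => ?_) i <;>
    simp [wAct, Equiv.Perm.extendLast_inv_castSucc, Equiv.Perm.extendLast_inv_last]

theorem snoc_mem_permissibleSet_iff (v0 ε : Fin n → ℤ) (η : ℤ) (τ : Equiv.Perm (Fin n))
    (a : Fin n → ℝ) (c : ℝ) :
    Fin.snoc a c ∈ permissibleSet (Fin.snoc v0 0) (Fin.snoc ε η) τ.extendLast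
      ↔ ∑ i, |wAct n v0 ε τ a i - a i| + |η * c - c| ≤ 1 := by
  rw [mem_permissibleSet_iff, Fin.sum_univ_castSucc, wAct_snoc]
  simp

theorem Fin.ite_val_eq_snoc {α : Type*} (p : ℕ → Prop) [DecidablePred p] (x y : α) :
    (fun i : Fin (n + 1) => if p i then x else y)
      = Fin.snoc (fun i : Fin n => if p i then x else y) (if p n then x else y) := by
  funext i
  refine Fin.lastCases ?_ (fun j => ?_) i <;> simp

theorem eq_snoc_of_mem_verticesD (hn : n ≠ 0) {v : Fin (n + 1) → ℝ} (hv : v ∈ verticesD n) :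
    (∃ b ∈ verticesB n, v = Fin.snoc b 0) ∨
      ∃ c : ℝ, |c| = 1 / 2 ∧ v = Fin.snoc (fun _ => 1 / 2) c := by
  obtain rfl | rfl | rfl | rfl | ⟨m, hm2, hmn, rfl⟩ := hv
  · exact .inl ⟨0, Set.mem_insert _ _, (Fin.snoc_init_self _).symm⟩
  · refine .inl ⟨_, Set.mem_insert_of_mem _ (Set.mem_insert _ _), ?_⟩
    rw [Fin.ite_val_eq_snoc (· = 0), if_neg hn]
  · exact .inr ⟨1 / 2, by norm_num, (Fin.snoc_init_self _).symm⟩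
  · refine .inr ⟨-(1 / 2), by norm_num, ?_⟩
    rw [Fin.ite_val_eq_snoc (· = n), if_pos rfl]
    congr
    funext i
    simp [i.isLt.ne]
  · refine .inl ⟨_, Set.mem_insert_of_mem _ (Set.mem_insert_of_mem _ ⟨m, hm2, by omega, rfl⟩), ?_⟩
    rw [Fin.ite_val_eq_snoc (· < m), if_neg (by omega)]

end Embedding

/-- if w = t_{v₀}σ ∈ W̃_{2n+1}, σ = (ε₁,...,ε_n)·τ, is μ-permissible
(type B_n), then its image under the Steinberg embedding W̃_{2n+1} ↪ W̃_{2n+2} —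
translations via (x₁,...,x_n) ↦ (x₁,...,x_n,0), and σ ↦ (ε₁,...,ε_n,η)·τ' with
τ' fixing n+1 and η = ±1 according as σ is even or odd (σ is even in S_{2n} iff
∏ε = 1) — is μ-permissible in W̃_{2n+2} (type D_{n+1}). -/
theorem stmt19 (n : ℕ) (hn : 2 ≤ n)
    (v0 : Fin n → ℤ) (ε : Fin n → ℤ) (hε : ∀ i, ε i = 1 ∨ ε i = -1)
    (τ : Equiv.Perm (Fin n))
    (hperm : PermB n v0 ε τ) :
    PermD n (Fin.snoc v0 0)
      (Fin.snoc ε (if (∏ i, ε i) = 1 then 1 else -1))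
      ((Equiv.permCongr finSumFinEquiv)
        (Equiv.sumCongr τ (Equiv.refl (Fin 1)))) := by
  obtain ⟨hpar, hB⟩ := hperm
  have hvertB : verticesB n ⊆ permissibleSet v0 ε τ :=
    (subset_convexHull ℝ _).trans <| (convex_convexHull ℝ _).subset_of_interior_subset
      (interior_convexHull_nonempty_iff_affineSpan_eq_top.2 (affineSpan_verticesB n))
      (isClosed_permissibleSet v0 ε τ) hB
  have hsign : ∏ i, ε i = 1 ∨ ∏ i, ε i = -1 := by
    rw [prod_eq_neg_one_pow_card_filter ε hε]
    exact neg_one_pow_eq_or ℤ _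
  refine ⟨?_, ?_, fun a ha => ?_⟩
  · rw [Fin.prod_univ_castSucc]
    rcases hsign with h | h <;> simp [h]
  · simpa [Fin.sum_univ_castSucc] using hpar
  show a ∈ permissibleSet (Fin.snoc v0 0) (Fin.snoc ε _) τ.extendLast
  refine convexHull_min (fun v hv => ?_) (convex_permissibleSet _ _ _) (interior_subset ha)
  have hhalf := hvertB (half_mem_verticesB hn)
  rcases eq_snoc_of_mem_verticesD (by omega) hv with ⟨b, hb, rfl⟩ | ⟨c, hc, rfl⟩
  · simpa [snoc_mem_permissibleSet_iff, ← mem_permissibleSet_iff] using hvertB hb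
  rw [snoc_mem_permissibleSet_iff]
  rcases hsign with h | h
  · simpa [h, mem_permissibleSet_iff] using hhalf
  have hlast : |((-1 : ℤ) : ℝ) * c - c| = 1 := by
    rw [show ((-1 : ℤ) : ℝ) * c - c = -(2 * c) by push_cast; ring, abs_neg, abs_mul, hc]
    norm_num
  rw [sum_abs_wAct_half_sub_eq_zero v0 ε τ hε h hpar hhalf, if_neg (by rw [h]; decide), hlast,
    zero_add]
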